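/- With E_τ = max(V_A - C_0, V_B - C_τ) where C_τ = βV_τ if V_τ > αC_0 and C_τ = C_0 otherwise, the exceedance probability decomposes as P(E_τ > y) = 1 - P(V_A - C_0 ≤ y, V_τ ≤ αC_0)·P(V_B - C_0 ≤ y, V_τ ≤ αC_0)/P(V_τ ≤ αC_0) - P(V_A - C_0 ≤ y, V_τ > αC_0)·P(V_B - βV_τ ≤ y, V_τ > αC_0)/P(V_τ > αC_0). -/

import Mathlib

open MeasureTheory ProbabilityTheory Real Filter Set

/-- The complementary error function `erfc z = (2/√π) ∫_z^∞ e^{-u²} du`. -/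
noncomputable def erfc (z : ℝ) : ℝ := (2 / Real.sqrt Real.pi) * ∫ u in Set.Ioi z, Real.exp (-u ^ 2)

/-- `B` is a standard one-dimensional Brownian motion under `μ`. -/
structure IsBrownianMotion {Ω : Type*} [MeasurableSpace Ω] (μ : Measure Ω) (B : ℝ → Ω → ℝ) : Prop where
  init : ∀ᵐ ω ∂μ, B 0 ω = 0
  cont : ∀ᵐ ω ∂μ, Continuous fun t => B t ω
  meas : ∀ t, Measurable (B t)
  gauss : ∀ s t : ℝ, 0 ≤ s → s ≤ t →
    Measure.map (fun ω => B t ω - B s ω) μ = gaussianReal 0 (Real.toNNReal (t - s))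
  indep : ∀ s t u v : ℝ, 0 ≤ s → s ≤ t → t ≤ u → u ≤ v →
    IndepFun (fun ω => B t ω - B s ω) (fun ω => B v ω - B u ω) μ

/-!
The event `{E_τ ≤ y}` splits along the measurable scenario `{V_τ ≤ α C₀}` into the two joint
events of the statement, and on each scenario conditional independence turns the joint probability
into a product divided by the probability of the scenario. The only analytic input is that the
running maxima are almost surely measurable: on a continuous path the supremum over a set of times
equals the supremum over a countable dense subset.
-/

section

variable {Ω : Type*} [MeasurableSpace Ω] {μ : Measure Ω}

theorem aemeasurable_iSup_of_ae_continuous {ι α : Type*} [TopologicalSpace ι]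
    [TopologicalSpace.SeparableSpace ι] [ConditionallyCompleteLinearOrder α] [TopologicalSpace α]
    [OrderTopology α] [SecondCountableTopology α] [MeasurableSpace α] [BorelSpace α]
    {X : ι → Ω → α} (hX : ∀ t, Measurable (X t)) (hcont : ∀ᵐ ω ∂μ, Continuous fun t => X t ω) :
    AEMeasurable (fun ω => ⨆ t, X t ω) μ := by
  obtain ⟨S, hS_countable, hS_dense⟩ := TopologicalSpace.exists_countable_dense ι
  have : Countable S := hS_countable.to_subtype
  refine ⟨fun ω => ⨆ s : S, X s ω, Measurable.iSup fun s => hX s, ?_⟩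
  filter_upwards [hcont] with ω hω
  exact (hS_dense.ciSup' hω).symm

/-- If `μ S = 0` then also `μ M = 0`, and the right-hand side is `0` because `x / 0 = 0`. -/
theorem measureReal_eq_mul_div_of_mul_eq [IsFiniteMeasure μ] {M A B S : Set Ω} (hMS : M ⊆ S)
    (h : μ.real M * μ.real S = μ.real A * μ.real B) :
    μ.real M = μ.real A * μ.real B / μ.real S := by
  rcases eq_or_ne (μ.real S) 0 with hS | hS
  · rw [hS, div_zero]
    exact measureReal_mono_null hMS hS
  · rw [eq_div_iff hS, h]

namespace IsBrownianMotion

variable {B : ℝ → Ω → ℝ}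

theorem measurable_affine (hB : IsBrownianMotion μ B) (V₀ σ t : ℝ) :
    Measurable fun ω => V₀ + σ * B t ω :=
  measurable_const.add ((hB.meas t).const_mul σ)

theorem aemeasurable_iSup_affine (hB : IsBrownianMotion μ B) (V₀ σ : ℝ) (I : Set ℝ) :
    AEMeasurable (fun ω => ⨆ s : I, V₀ + σ * B s ω) μ := by
  refine aemeasurable_iSup_of_ae_continuous (fun s => hB.measurable_affine V₀ σ s) ?_
  filter_upwards [hB.cont] with ω hω
  fun_prop

end IsBrownianMotion

end

theorem stmt8_general {Ω : Type*} [MeasurableSpace Ω] (μ : Measure Ω) [IsProbabilityMeasure μ]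
    (B : ℝ → Ω → ℝ) (hB : IsBrownianMotion μ B)
    (σ V₀ : ℝ) (τ T : ℝ)
    (α β : ℝ) (C₀ : ℝ)
    (V : ℝ → Ω → ℝ) (hV : ∀ s ω, V s ω = V₀ + σ * B s ω)
    (VA VB : Ω → ℝ)
    (hVA : ∀ ω, VA ω = ⨆ s : Set.Icc (0 : ℝ) τ, V s ω)
    (hVB : ∀ ω, VB ω = ⨆ s : Set.Icc τ T, V s ω)
    (Cτ : Ω → ℝ) (hCτ : ∀ ω, Cτ ω = if V τ ω > α * C₀ then β * V τ ω else C₀)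
    (Eτ : Ω → ℝ) (hEτ : ∀ ω, Eτ ω = max (VA ω - C₀) (VB ω - Cτ ω))
    (y : ℝ)
    -- conditional independence of the pre- and post-MTM maxima on each scenario:
    (hcond₁ : (μ {ω | VA ω - C₀ ≤ y ∧ VB ω - C₀ ≤ y ∧ V τ ω ≤ α * C₀}).toReal
        * (μ {ω | V τ ω ≤ α * C₀}).toReal
      = (μ {ω | VA ω - C₀ ≤ y ∧ V τ ω ≤ α * C₀}).toReal
        * (μ {ω | VB ω - C₀ ≤ y ∧ V τ ω ≤ α * C₀}).toReal)
    (hcond₂ : (μ {ω | VA ω - C₀ ≤ y ∧ VB ω - β * V τ ω ≤ y ∧ V τ ω > α * C₀}).toReal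
        * (μ {ω | V τ ω > α * C₀}).toReal
      = (μ {ω | VA ω - C₀ ≤ y ∧ V τ ω > α * C₀}).toReal
        * (μ {ω | VB ω - β * V τ ω ≤ y ∧ V τ ω > α * C₀}).toReal) :
    (μ {ω | Eτ ω > y}).toReal
      = 1 - (μ {ω | VA ω - C₀ ≤ y ∧ V τ ω ≤ α * C₀}).toReal
              * (μ {ω | VB ω - C₀ ≤ y ∧ V τ ω ≤ α * C₀}).toReal
              / (μ {ω | V τ ω ≤ α * C₀}).toReal
          - (μ {ω | VA ω - C₀ ≤ y ∧ V τ ω > α * C₀}).toReal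
              * (μ {ω | VB ω - β * V τ ω ≤ y ∧ V τ ω > α * C₀}).toReal
              / (μ {ω | V τ ω > α * C₀}).toReal := by
  simp only [← measureReal_def] at hcond₁ hcond₂ ⊢
  have hVτ : Measurable (V τ) := by
    simpa only [← hV] using hB.measurable_affine V₀ σ τ
  have hCτ_meas : Measurable Cτ := by
    simp_rw [funext hCτ]
    exact Measurable.ite (measurableSet_lt measurable_const hVτ)
      (measurable_const.mul hVτ) measurable_const
  have hEτ_meas : AEMeasurable Eτ μ := by
    simp_rw [funext hEτ, funext hVA, funext hVB, hV]
    exact ((hB.aemeasurable_iSup_affine V₀ σ _).sub_const C₀).max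
      ((hB.aemeasurable_iSup_affine V₀ σ _).sub hCτ_meas.aemeasurable)
  have hS : MeasurableSet {ω | V τ ω ≤ α * C₀} := measurableSet_le hVτ measurable_const
  have hsplit : μ.real {ω | Eτ ω ≤ y}
      = μ.real {ω | VA ω - C₀ ≤ y ∧ VB ω - C₀ ≤ y ∧ V τ ω ≤ α * C₀}
        + μ.real {ω | VA ω - C₀ ≤ y ∧ VB ω - β * V τ ω ≤ y ∧ V τ ω > α * C₀} := by
    rw [← measureReal_inter_add_sdiff hS]
    congr 2 <;> ext ω <;> rcases le_or_gt (V τ ω) (α * C₀) with h | h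
    · simp [hEτ, hCτ, h, h.not_gt]
    · simp [h.not_ge]
    · simp [h]
    · simp [hEτ, hCτ, h, h.not_ge]
  have hcompl : {ω | Eτ ω > y} = {ω | Eτ ω ≤ y}ᶜ := by ext; simp
  rw [hcompl, probReal_compl_eq_one_sub₀ (nullMeasurableSet_le hEτ_meas aemeasurable_const),
    hsplit, measureReal_eq_mul_div_of_mul_eq (fun ω hω => hω.2.2) hcond₁,
    measureReal_eq_mul_div_of_mul_eq (fun ω hω => hω.2.2) hcond₂]
  ring

/-- Equation 2.1: the exceedance probability of the maximum exposure `E_τ` decomposes over the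
margin-call/no-margin-call scenarios, using the conditional independence (given each scenario) of
the pre- and post-MTM maxima. -/
theorem stmt8 {Ω : Type*} [MeasurableSpace Ω] (μ : Measure Ω) [IsProbabilityMeasure μ]
    (B : ℝ → Ω → ℝ) (hB : IsBrownianMotion μ B)
    (σ V₀ : ℝ) (hσ : 0 < σ) (hV₀ : 0 ≤ V₀) (τ T : ℝ) (hτ : 0 < τ) (hτT : τ < T)
    (α β : ℝ) (hα : 0 < α) (hβ : 0 < β) (C₀ : ℝ) (hC₀ : C₀ = β * V₀)
    (V : ℝ → Ω → ℝ) (hV : ∀ s ω, V s ω = V₀ + σ * B s ω)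
    (VA VB : Ω → ℝ)
    (hVA : ∀ ω, VA ω = ⨆ s : Set.Icc (0 : ℝ) τ, V s ω)
    (hVB : ∀ ω, VB ω = ⨆ s : Set.Icc τ T, V s ω)
    (Cτ : Ω → ℝ) (hCτ : ∀ ω, Cτ ω = if V τ ω > α * C₀ then β * V τ ω else C₀)
    (Eτ : Ω → ℝ) (hEτ : ∀ ω, Eτ ω = max (VA ω - C₀) (VB ω - Cτ ω))
    (y : ℝ)
    -- conditional independence of the pre- and post-MTM maxima on each scenario:
    (hcond₁ : (μ {ω | VA ω - C₀ ≤ y ∧ VB ω - C₀ ≤ y ∧ V τ ω ≤ α * C₀}).toReal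
        * (μ {ω | V τ ω ≤ α * C₀}).toReal
      = (μ {ω | VA ω - C₀ ≤ y ∧ V τ ω ≤ α * C₀}).toReal
        * (μ {ω | VB ω - C₀ ≤ y ∧ V τ ω ≤ α * C₀}).toReal)
    (hcond₂ : (μ {ω | VA ω - C₀ ≤ y ∧ VB ω - β * V τ ω ≤ y ∧ V τ ω > α * C₀}).toReal
        * (μ {ω | V τ ω > α * C₀}).toReal
      = (μ {ω | VA ω - C₀ ≤ y ∧ V τ ω > α * C₀}).toReal
        * (μ {ω | VB ω - β * V τ ω ≤ y ∧ V τ ω > α * C₀}).toReal) :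
    (μ {ω | Eτ ω > y}).toReal
      = 1 - (μ {ω | VA ω - C₀ ≤ y ∧ V τ ω ≤ α * C₀}).toReal
              * (μ {ω | VB ω - C₀ ≤ y ∧ V τ ω ≤ α * C₀}).toReal
              / (μ {ω | V τ ω ≤ α * C₀}).toReal
          - (μ {ω | VA ω - C₀ ≤ y ∧ V τ ω > α * C₀}).toReal
              * (μ {ω | VB ω - β * V τ ω ≤ y ∧ V τ ω > α * C₀}).toReal
              / (μ {ω | V τ ω > α * C₀}).toReal :=
  stmt8_general μ B hB σ V₀ τ T α β C₀ V hV VA VB hVA hVB Cτ hCτ Eτ hEτ y hcond₁ hcond₂
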